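/- arXiv:1902.04569 — 2 statements merged into one kernel-verified Lean document; each statement's English description precedes it below -/
import Mathlib

section
/- Let H be the 4×4 Hermitian matrix (rows/columns indexed by (x₁y₁, x₁y₂, x₂y₁, x₂y₂)) H = [[0,0,0,1],[0,−2,1,0],[0,1,−2,0],[1,0,0,0]], and let ρ_e = (1/2)·w w† where w = e₁⊗e₁ + e₂⊗e₂ ∈ ℂ²⊗ℂ² (i.e. ρ_e is the 4×4 matrix with entries 1/2 in positions (1,1),(1,4),(4,1),(4,4) and 0 elsewhere). Then: (i) Re((x⊗y)†H(x⊗y)) ≤ 0 for all x, y ∈ ℂ²; (ii) H is not negative semidefinite (there exists v ∈ ℂ⁴ with Re(v†Hv) > 0); (iii) Re Tr(Hρ_e) = 1; and consequently (iv) ρ_e is not separable, i.e. ρ_e does not lie in the convex hull of {(x⊗y)(x⊗y)† : x, y unit vectors in ℂ²}. -/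
/-!
`H` is an entanglement witness: its form is `≤ 0` on product vectors, so `ρ ↦ Re Tr(Hρ)`, which is
`ℝ`-linear and equals `(x⊗y)†H(x⊗y)` on `(x⊗y)(x⊗y)†`, is `≤ 0` on their convex hull, whereas
`Re Tr(Hρ_e) = ½ w†Hw = 1`.
-/

open Matrix ComplexOrder

/-- The tensor product of two vectors: `(x ⊗ y)(i,j) = xᵢ · yⱼ`. -/
def tens (x : Fin 2 → ℂ) (y : Fin 2 → ℂ) : Fin 2 × Fin 2 → ℂ :=
  fun p => x p.1 * y p.2

/-- The rank-one matrix `v v†`. -/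
def outer {ι : Type*} (v : ι → ℂ) : Matrix ι ι ℂ :=
  Matrix.of fun s t => v s * (starRingEnd ℂ) (v t)

/-- A unit vector: `∑ |xᵢ|² = 1`. -/
def IsUnitVec (x : Fin 2 → ℂ) : Prop :=
  ∑ i, Complex.normSq (x i) = 1

/-- The Hermitian matrix `H = [[0,0,0,1],[0,−2,1,0],[0,1,−2,0],[1,0,0,0]]`,
with rows/columns indexed by `(Fin 2 × Fin 2)` in the order `(0,0),(0,1),(1,0),(1,1)`. -/
def Hmat : Matrix (Fin 2 × Fin 2) (Fin 2 × Fin 2) ℂ :=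
  Matrix.of fun s t =>
    if (s = ((0 : Fin 2), (0 : Fin 2)) ∧ t = ((1 : Fin 2), (1 : Fin 2))) ∨
       (s = ((1 : Fin 2), (1 : Fin 2)) ∧ t = ((0 : Fin 2), (0 : Fin 2))) ∨
       (s = ((0 : Fin 2), (1 : Fin 2)) ∧ t = ((1 : Fin 2), (0 : Fin 2))) ∨
       (s = ((1 : Fin 2), (0 : Fin 2)) ∧ t = ((0 : Fin 2), (1 : Fin 2))) then 1
    else if (s = ((0 : Fin 2), (1 : Fin 2)) ∧ t = ((0 : Fin 2), (1 : Fin 2))) ∨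
            (s = ((1 : Fin 2), (0 : Fin 2)) ∧ t = ((1 : Fin 2), (0 : Fin 2))) then -2
    else 0

/-- The vector `w = e₁⊗e₁ + e₂⊗e₂`. -/
def wvec : Fin 2 × Fin 2 → ℂ := fun p => if p.1 = p.2 then 1 else 0

/-- The entangled Bell density matrix `ρ_e = (1/2)·w w†`. -/
noncomputable def rhoE : Matrix (Fin 2 × Fin 2) (Fin 2 × Fin 2) ℂ := ((1 : ℂ)/2) • outer wvec

lemma trace_mul_outer {ι : Type*} [Fintype ι] (H : Matrix ι ι ℂ) (v : ι → ℂ) :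
    (H * outer v).trace = star v ⬝ᵥ H *ᵥ v := by
  simp only [Matrix.trace, Matrix.mul_apply, outer, Matrix.of_apply, Matrix.diag_apply,
    dotProduct, mulVec, Pi.star_apply, RCLike.star_def, Finset.mul_sum]
  refine Finset.sum_congr rfl fun s _ => Finset.sum_congr rfl fun t _ => ?_
  ring

lemma not_mem_convexHull_of_re_trace_mul_pos {ι : Type*} [Fintype ι] (H : Matrix ι ι ℂ)
    {S : Set (Matrix ι ι ℂ)} (hS : ∀ M ∈ S, ((H * M).trace).re ≤ 0) {ρ : Matrix ι ι ℂ}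
    (hρ : 0 < ((H * ρ).trace).re) : ρ ∉ convexHull ℝ S := by
  have hlin : IsLinearMap ℝ fun M : Matrix ι ι ℂ => ((H * M).trace).re :=
    ⟨fun M N => by simp [Matrix.mul_add], fun c M => by simp⟩
  have hconv := convex_halfSpace_le hlin 0
  exact fun hmem => hρ.not_ge (convexHull_min hS hconv hmem)

/-- With `c = x̄₀x₁` and `d = ȳ₀y₁` the form is `4 Re c Re d - 2(|x₀y₁|² + |x₁y₀|²)`,
which is `≤ 0` by AM-GM since `|c||d| = |x₀y₁||x₁y₀|`. -/
lemma Hmat_form_tens_re_nonpos (x y : Fin 2 → ℂ) :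
    (star (tens x y) ⬝ᵥ Hmat *ᵥ tens x y).re ≤ 0 := by
  simp only [dotProduct, mulVec, Fintype.sum_prod_type, Fin.sum_univ_two, tens, Hmat,
    Matrix.of_apply, Pi.star_apply, RCLike.star_def, Prod.mk.injEq]
  norm_num
  nlinarith [sq_nonneg ((x 0).re * (y 1).re - (x 1).re * (y 0).re),
    sq_nonneg ((x 0).re * (y 1).im - (x 1).re * (y 0).im),
    sq_nonneg ((x 0).im * (y 1).re - (x 1).im * (y 0).re),
    sq_nonneg ((x 0).im * (y 1).im - (x 1).im * (y 0).im)]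

lemma Hmat_form_wvec : star wvec ⬝ᵥ Hmat *ᵥ wvec = 2 := by
  simp only [dotProduct, mulVec, Fintype.sum_prod_type, Fin.sum_univ_two, wvec, Hmat,
    Matrix.of_apply, Pi.star_apply, RCLike.star_def, Prod.mk.injEq]
  norm_num

lemma Hmat_mul_rhoE_trace : (Hmat * rhoE).trace = 1 := by
  rw [rhoE, Matrix.mul_smul, Matrix.trace_smul, trace_mul_outer, Hmat_form_wvec]
  norm_num

/-- (i) the quadratic form of `H` is ≤ 0 on all product vectors;
(ii) `H` is not negative semidefinite; (iii) `Re Tr(H ρ_e) = 1`; and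
(iv) `ρ_e` is not separable. -/
theorem statement9 :
    (∀ x y : Fin 2 → ℂ, (star (tens x y) ⬝ᵥ Hmat.mulVec (tens x y)).re ≤ 0) ∧
    (∃ v : Fin 2 × Fin 2 → ℂ, 0 < (star v ⬝ᵥ Hmat.mulVec v).re) ∧
    ((Hmat * rhoE).trace).re = 1 ∧
    rhoE ∉ convexHull ℝ
      {M : Matrix (Fin 2 × Fin 2) (Fin 2 × Fin 2) ℂ |
        ∃ x y : Fin 2 → ℂ, IsUnitVec x ∧ IsUnitVec y ∧ M = outer (tens x y)} := by
  have hrhoE : ((Hmat * rhoE).trace).re = 1 := by simp [Hmat_mul_rhoE_trace]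
  refine ⟨Hmat_form_tens_re_nonpos, ⟨wvec, by simp [Hmat_form_wvec]⟩, hrhoE, ?_⟩
  refine not_mem_convexHull_of_re_trace_mul_pos Hmat ?_ (by rw [hrhoE]; exact one_pos)
  rintro _ ⟨x, y, -, -, rfl⟩
  rw [trace_mul_outer]
  exact Hmat_form_tens_re_nonpos x y
end

section
/- There exists a 4×4 Hermitian matrix W (indexed by Fin 2 × Fin 2) such that Re((x⊗y)†W(x⊗y)) ≥ 0 for all x, y ∈ ℂ², yet W is not positive semidefinite. (Hence for bipartite systems the quadratic form (x⊗y)†G(x⊗y) can be nonnegative on all product vectors while the matrix G is indefinite, in contrast with the single-particle case where x†Gx ≥ 0 for all x if and only if G is PSD.) -/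
open Matrix ComplexOrder

/-- The swap operator on `ℂ² ⊗ ℂ²`. -/
def Wswap : Matrix (Fin 2 × Fin 2) (Fin 2 × Fin 2) ℂ :=
  Matrix.of fun p q => if p.1 = q.2 ∧ p.2 = q.1 then 1 else 0

/-- there is a Hermitian `4×4` matrix `W` whose quadratic form is
nonnegative on every product vector `x ⊗ y`, yet `W` is not positive semidefinite. -/
theorem statement10 :
    ∃ W : Matrix (Fin 2 × Fin 2) (Fin 2 × Fin 2) ℂ, W.IsHermitian ∧
      (∀ x y : Fin 2 → ℂ, 0 ≤ (star (tens x y) ⬝ᵥ W.mulVec (tens x y)).re) ∧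
      ¬ W.PosSemidef := by
  refine ⟨Wswap, ?_, ?_, ?_⟩
  · ext p q
    simp only [Matrix.conjTranspose_apply, Wswap, Matrix.of_apply]
    by_cases h : q.1 = p.2 ∧ q.2 = p.1 <;> aesop
  · intro x y
    have key : (star (tens x y) ⬝ᵥ Wswap.mulVec (tens x y))
        = (starRingEnd ℂ (x 0) * y 0 + starRingEnd ℂ (x 1) * y 1) *
          (starRingEnd ℂ (starRingEnd ℂ (x 0) * y 0 + starRingEnd ℂ (x 1) * y 1)) := by
      simp only [Wswap, Matrix.mulVec, dotProduct, tens, Fintype.sum_prod_type,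
        Fin.sum_univ_succ, Matrix.of_apply, Pi.star_apply, RCLike.star_def,
        Fin.sum_univ_zero, add_zero, map_add, _root_.map_mul,
        Complex.conj_conj]
      norm_num
      ring
    rw [key, Complex.mul_conj]
    simpa using Complex.normSq_nonneg _
  · intro hP
    have := hP.dotProduct_mulVec_nonneg (fun p : Fin 2 × Fin 2 => ( if p = (0,1) then 1 else if p = (1,0) then -1 else 0 : ℂ))
    rw [show ((0:ℂ) ≤ _) ↔ _ from Complex.le_def] at this
    simp [Wswap, Matrix.mulVec, dotProduct, Fintype.sum_prod_type, Fin.sum_univ_succ,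
      Prod.ext_iff] at this
    linarith
end
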